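/- Let f: R^{n×m} → R satisfy the entrywise smoothness f(Y) ≤ f(X) + ⟨∇f(X), Y−X⟩ + (1/2) ‖√L ⊙ (Y−X)‖_F² for all X, Y, where L is an entrywise positive matrix and √L is the entrywise square root. For the deterministic update X_{t+1} = X_t − η msign(∇f(X_t)) with ∇f(X_t) invertible square matrices (so r = n = m), one step satisfies f(X_{t+1}) ≤ f(X_t) − η ‖∇f(X_t)‖_* + (r η²/2) ‖√L‖_F², where ‖·‖_* is the nuclear norm. -/

import Mathlib

open Matrix

/-- Nuclear norm: sum of singular values (square roots of eigenvalues of `Xᴴ X`). -/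
noncomputable def nuclearNorm {n m : ℕ} (X : Matrix (Fin n) (Fin m) ℝ) : ℝ :=
  ∑ j, Real.sqrt (((Matrix.isHermitian_conjTranspose_mul_self X : (Xᵀ * X).IsHermitian)).eigenvalues j)

/-- Matrix sign (orthogonal polar factor) of an invertible square matrix. -/
noncomputable def msign {n : ℕ} (X : Matrix (Fin n) (Fin n) ℝ)
    (h : (Xᵀ * X).PosDef) : Matrix (Fin n) (Fin n) ℝ :=
  X * ((h.posSemidef.1.eigenvectorUnitary : Matrix (Fin n) (Fin n) ℝ) *
    diagonal ((RCLike.ofReal : ℝ → ℝ) ∘ (√·) ∘ h.posSemidef.1.eigenvalues) *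
    (star h.posSemidef.1.eigenvectorUnitary : Matrix (Fin n) (Fin n) ℝ))⁻¹

noncomputable def psdSqrt {n : ℕ} {A : Matrix (Fin n) (Fin n) ℝ} (hA : A.PosSemidef) :
    Matrix (Fin n) (Fin n) ℝ :=
  (hA.1.eigenvectorUnitary : Matrix (Fin n) (Fin n) ℝ) *
    diagonal ((RCLike.ofReal : ℝ → ℝ) ∘ (√·) ∘ hA.1.eigenvalues) *
    (star hA.1.eigenvectorUnitary : Matrix (Fin n) (Fin n) ℝ)

lemma psdSqrt_mul_self {n : ℕ} {A : Matrix (Fin n) (Fin n) ℝ} (hA : A.PosSemidef) :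
    psdSqrt hA * psdSqrt hA = A := by
  conv_rhs => rw [hA.1.spectral_theorem]
  rw [Unitary.conjStarAlgAut_apply, psdSqrt]
  have hU := Unitary.coe_star_mul_self hA.1.eigenvectorUnitary
  simp only [Matrix.mul_assoc]
  congr 1
  rw [← Matrix.mul_assoc (star (hA.1.eigenvectorUnitary : Matrix (Fin n) (Fin n) ℝ)),
    hU, Matrix.one_mul, ← Matrix.mul_assoc, diagonal_mul_diagonal]
  congr 2
  funext i
  simp [Real.mul_self_sqrt (hA.eigenvalues_nonneg i)]

lemma psdSqrt_transpose {n : ℕ} {A : Matrix (Fin n) (Fin n) ℝ} (hA : A.PosSemidef) :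
    (psdSqrt hA)ᵀ = psdSqrt hA := by
  rw [← conjTranspose_eq_transpose_of_trivial, psdSqrt]
  simp [Matrix.mul_assoc, Matrix.star_eq_conjTranspose, conjTranspose_eq_transpose_of_trivial]

lemma trace_sqrt_eq {n : ℕ} {A : Matrix (Fin n) (Fin n) ℝ} (hA : A.PosSemidef) :
    (psdSqrt hA).trace = ∑ j, Real.sqrt (hA.1.eigenvalues j) := by
  rw [psdSqrt, Matrix.trace_mul_cycle]
  rw [Unitary.coe_star_mul_self, one_mul, Matrix.trace_diagonal]
  simp

lemma deva_aux (n : ℕ)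
    (f : Matrix (Fin n) (Fin n) ℝ → ℝ)
    (L : Matrix (Fin n) (Fin n) ℝ) (hL : ∀ i j, 0 < L i j)
    (η : ℝ) (hη : 0 < η)
    (X G O S : Matrix (Fin n) (Fin n) ℝ)
    (hsmooth : ∀ Y : Matrix (Fin n) (Fin n) ℝ,
      f Y ≤ f X + (∑ i, ∑ j, G i j * (Y i j - X i j)) +
        (1 / 2) * ∑ i, ∑ j, L i j * (Y i j - X i j) ^ 2)
    (hSS : S * S = Gᵀ * G) (hSsymm : Sᵀ = S) (hSdet : IsUnit S.det)
    (hO : O = G * S⁻¹) (hnn : S.trace = nuclearNorm G) :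
    f (X - η • O) ≤ f X - η * nuclearNorm G +
      ((n : ℝ) * η ^ 2 / 2) * ∑ i, ∑ j, L i j := by
  have hSinv : S * S⁻¹ = 1 := Matrix.mul_nonsing_inv S hSdet
  have hSinv' : S⁻¹ * S = 1 := Matrix.nonsing_inv_mul S hSdet
  -- key identity: Gᵀ * O = S
  have hGO : Gᵀ * O = S := by
    rw [hO, ← Matrix.mul_assoc, ← hSS, Matrix.mul_assoc, hSinv, Matrix.mul_one]
  -- O is orthogonal
  have hOO : Oᵀ * O = 1 := by
    rw [hO, Matrix.transpose_mul, Matrix.transpose_nonsing_inv, hSsymm,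
      Matrix.mul_assoc, ← Matrix.mul_assoc Gᵀ, ← hSS, ← Matrix.mul_assoc,
      ← Matrix.mul_assoc S⁻¹ S S, hSinv', one_mul, hSinv]
  -- entrywise bound on O
  have hObd : ∀ i j, O i j ^ 2 ≤ 1 := by
    intro i j
    have h1 : ∑ k, O k j * O k j = 1 := by
      have := congrFun (congrFun hOO j) j
      simpa [Matrix.mul_apply, Matrix.transpose_apply, Matrix.one_apply] using this
    calc O i j ^ 2 = O i j * O i j := sq (O i j)
      _ ≤ ∑ k, O k j * O k j :=
          Finset.single_le_sum (f := fun k => O k j * O k j)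
            (fun k _ => mul_self_nonneg _) (Finset.mem_univ i)
      _ = 1 := h1
  -- inner product equals nuclear norm
  have hinner : ∑ i, ∑ j, G i j * O i j = nuclearNorm G := by
    have htr : (Gᵀ * O).trace = ∑ i, ∑ j, G j i * O j i := by
      simp [Matrix.trace, Matrix.mul_apply, Matrix.diag, Matrix.transpose_apply]
    rw [Finset.sum_comm, ← htr, hGO, hnn]
  -- apply smoothness
  have key := hsmooth (X - η • O)
  have hYX : ∀ i j, (X - η • O) i j - X i j = -(η * O i j) := by
    intro i j
    simp only [Matrix.sub_apply, Matrix.smul_apply, smul_eq_mul]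
    ring
  have e1 : ∑ i, ∑ j, G i j * ((X - η • O) i j - X i j)
      = -(η * ∑ i, ∑ j, G i j * O i j) := by
    rw [Finset.mul_sum, ← neg_eq_iff_eq_neg, ← Finset.sum_neg_distrib]
    refine Finset.sum_congr rfl fun i _ => ?_
    rw [Finset.mul_sum, ← Finset.sum_neg_distrib]
    refine Finset.sum_congr rfl fun j _ => ?_
    rw [hYX]; ring
  have e2 : ∑ i, ∑ j, L i j * ((X - η • O) i j - X i j) ^ 2
      = η ^ 2 * ∑ i, ∑ j, L i j * O i j ^ 2 := by
    rw [Finset.mul_sum]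
    refine Finset.sum_congr rfl fun i _ => ?_
    rw [Finset.mul_sum]
    refine Finset.sum_congr rfl fun j _ => ?_
    rw [hYX]; ring
  rw [e1, e2] at key
  -- bound the quadratic term
  have hquad : ∑ i, ∑ j, L i j * O i j ^ 2 ≤ (n : ℝ) * ∑ i, ∑ j, L i j := by
    rw [Finset.mul_sum]
    refine Finset.sum_le_sum fun i _ => ?_
    rw [Finset.mul_sum]
    refine Finset.sum_le_sum fun j _ => ?_
    have hn1 : (1 : ℝ) ≤ n := by
      exact_mod_cast Nat.one_le_iff_ne_zero.mpr (by rintro rfl; exact i.elim0)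
    calc L i j * O i j ^ 2 ≤ L i j * 1 :=
          mul_le_mul_of_nonneg_left (hObd i j) (hL i j).le
      _ ≤ (n : ℝ) * L i j := by rw [mul_one, mul_comm]; nlinarith [(hL i j).le]
  calc f (X - η • O) ≤ f X + -(η * ∑ i, ∑ j, G i j * O i j)
        + (1 / 2) * (η ^ 2 * ∑ i, ∑ j, L i j * O i j ^ 2) := key
    _ ≤ f X - η * nuclearNorm G + ((n : ℝ) * η ^ 2 / 2) * ∑ i, ∑ j, L i j := by
        rw [hinner]
        have : (1 / 2) * (η ^ 2 * ∑ i, ∑ j, L i j * O i j ^ 2)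
            ≤ ((n : ℝ) * η ^ 2 / 2) * ∑ i, ∑ j, L i j := by
          nlinarith [sq_nonneg η, hquad]
        linarith

/-- Single-step descent for deterministic spectral descent `X' = X − η msign(∇f(X))`
under entrywise smoothness with matrix `L` (note `‖√L‖_F² = Σ_{ij} L_{ij}` and
`r = n` in the square invertible case):
`f(X') ≤ f(X) − η ‖∇f(X)‖_* + (r η²/2) ‖√L‖_F²`. -/
theorem deva_sinfty_descent_step (n : ℕ)
    (f : Matrix (Fin n) (Fin n) ℝ → ℝ)
    (grad : Matrix (Fin n) (Fin n) ℝ → Matrix (Fin n) (Fin n) ℝ)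
    (L : Matrix (Fin n) (Fin n) ℝ) (hL : ∀ i j, 0 < L i j)
    (hsmooth : ∀ X Y : Matrix (Fin n) (Fin n) ℝ,
      f Y ≤ f X + (∑ i, ∑ j, grad X i j * (Y i j - X i j)) +
        (1 / 2) * ∑ i, ∑ j, L i j * (Y i j - X i j) ^ 2)
    (η : ℝ) (hη : 0 < η)
    (X : Matrix (Fin n) (Fin n) ℝ)
    (hinv : IsUnit (grad X).det)
    (h : ((grad X)ᵀ * grad X).PosDef) :
    f (X - η • msign (grad X) h) ≤
      f X - η * nuclearNorm (grad X) +
        ((n : ℝ) * η ^ 2 / 2) * ∑ i, ∑ j, L i j := by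
  have hSS : psdSqrt h.posSemidef * psdSqrt h.posSemidef = (grad X)ᵀ * grad X :=
    psdSqrt_mul_self h.posSemidef
  have hSsymm : (psdSqrt h.posSemidef)ᵀ = psdSqrt h.posSemidef :=
    psdSqrt_transpose h.posSemidef
  have hSdet : IsUnit (psdSqrt h.posSemidef).det := by
    have heq : (psdSqrt h.posSemidef).det * (psdSqrt h.posSemidef).det
        = (grad X).det * (grad X).det := by
      rw [← Matrix.det_mul, hSS, Matrix.det_mul, Matrix.det_transpose]
    exact isUnit_of_mul_isUnit_left (heq ▸ (hinv.mul hinv))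
  exact deva_aux n f L hL η hη X (grad X) (msign (grad X) h) (psdSqrt h.posSemidef)
    (hsmooth X) hSS hSsymm hSdet rfl (trace_sqrt_eq h.posSemidef)
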